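/- For the masked diffusion path p_{t|1}(x|x₁) = κ_t δ_{x₁}(x) + (1−κ_t)δ_M(x) with differentiable schedule κ, the conditional rate matrix u_{t|1}(y,x|x₁) := (κ̇_t/(1−κ_t))(δ_{x₁}(y) − δ_x(y)) generates the path, i.e. for every y ∈ S and x₁ ≠ M, d/dt p_{t|1}(y|x₁) = Σ_{x ∈ S} u_{t|1}(y,x|x₁) p_{t|1}(x|x₁). -/

import Mathlib

/-! Since the path `p_t` is a probability vector,
`∑ₓ (δ_{x₁}(y) − δ_x(y)) p_t(x) = δ_{x₁}(y) − p_t(y) = (1 − κ_t)(δ_{x₁}(y) − δ_M(y))`,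
so the factor `1 − κ_t` cancels and the right-hand side is `κ̇_t (δ_{x₁}(y) − δ_M(y))`,
the derivative of `p_t(y)`. -/

/-- Kronecker delta `δ_a(b)`. -/
def kdelta {S : Type*} [DecidableEq S] (a b : S) : ℝ := if b = a then 1 else 0

open Finset

section Kronecker

variable {S : Type*} [DecidableEq S] [Fintype S]

theorem sum_kdelta (a : S) : ∑ x, kdelta a x = 1 := by
  simp [kdelta]

theorem sum_kdelta_mul (y : S) (f : S → ℝ) : ∑ x, kdelta x y * f x = f y := by
  simp [kdelta]

theorem sum_convex_kdelta (k : ℝ) (a b : S) :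
    ∑ x, (k * kdelta a x + (1 - k) * kdelta b x) = 1 := by
  rw [sum_add_distrib, ← mul_sum, ← mul_sum, sum_kdelta, sum_kdelta]
  ring

theorem sum_rate_to_mul (c : ℝ) (z y : S) {p : S → ℝ} (hp : ∑ x, p x = 1) :
    ∑ x, c * (kdelta z y - kdelta x y) * p x = c * (kdelta z y - p y) := by
  simp only [mul_assoc, ← mul_sum, sub_mul, sum_sub_distrib, hp, sum_kdelta_mul, mul_one]

end Kronecker

theorem masked_diffusion_kfe_general
    {S : Type*} [Fintype S] [DecidableEq S] (M : S)
    (κ κ' : ℝ → ℝ) (hderiv : ∀ u, HasDerivAt κ (κ' u) u)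
    (t : ℝ) (hκt1 : κ t < 1)
    (x₁ : S) (y : S) :
    HasDerivAt (fun s => κ s * kdelta x₁ y + (1 - κ s) * kdelta M y)
      (∑ x : S, (κ' t / (1 - κ t)) * (kdelta x₁ y - kdelta x y) *
        (κ t * kdelta x₁ x + (1 - κ t) * kdelta M x)) t := by
  have hne : 1 - κ t ≠ 0 := sub_ne_zero.2 hκt1.ne'
  rw [sum_rate_to_mul _ _ _ (sum_convex_kdelta _ _ _)]
  refine (((hderiv t).mul_const (kdelta x₁ y)).add
    (((hderiv t).const_sub 1).mul_const (kdelta M y))).congr_deriv ?_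
  field_simp
  ring

/-- the conditional rate matrix
`u_{t|1}(y,x|x₁) = (κ̇_t/(1−κ_t))(δ_{x₁}(y) − δ_x(y))` generates the masked diffusion path
`p_{t|1}(x|x₁) = κ_t δ_{x₁}(x) + (1−κ_t)δ_M(x)`: the Kolmogorov forward equation
`d/dt p_{t|1}(y|x₁) = Σ_x u_{t|1}(y,x|x₁) p_{t|1}(x|x₁)` holds for all `y` and `x₁ ≠ M`. -/
theorem masked_diffusion_kfe
    {S : Type*} [Fintype S] [DecidableEq S] (M : S)
    (κ κ' : ℝ → ℝ) (hderiv : ∀ u, HasDerivAt κ (κ' u) u)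
    (hκ_mono : MonotoneOn κ (Set.Icc 0 1))
    (hκ0 : κ 0 = 0) (hκ1 : κ 1 = 1)
    (t : ℝ) (ht0 : 0 ≤ t) (ht1 : t < 1) (hκt1 : κ t < 1)
    (x₁ : S) (hx₁ : x₁ ≠ M) (y : S) :
    HasDerivAt (fun s => κ s * kdelta x₁ y + (1 - κ s) * kdelta M y)
      (∑ x : S, (κ' t / (1 - κ t)) * (kdelta x₁ y - kdelta x y) *
        (κ t * kdelta x₁ x + (1 - κ t) * kdelta M x)) t :=
  masked_diffusion_kfe_general M κ κ' hderiv t hκt1 x₁ y
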